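/- Let p be an odd prime and let ρ : H_p → GL(V) be a faithful irreducible complex representation of the discrete Heisenberg group H_p on a p-dimensional complex vector space V. For every g ∈ H_p not lying in the center of H_p, the linear map ρ(g) has exactly p distinct eigenvalues, and they are λ, λζ, λζ², …, λζ^{p−1} for some nonzero λ ∈ ℂ and some primitive p-th root of unity ζ; moreover, each eigenspace of ρ(g) is one-dimensional. In particular, ρ(g) has exactly p invariant one-dimensional subspaces of V. -/
import Mathlib


open Matrix

/-- The unitriangular matrix `M(a,b,c)`. -/
def Hmat (p : ℕ) (a b c : ZMod p) : Matrix (Fin 3) (Fin 3) (ZMod p) :=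
  !![1, a, b; 0, 1, c; 0, 0, 1]

lemma Hmat_mul (p : ℕ) (a b c a' b' c' : ZMod p) :
    Hmat p a b c * Hmat p a' b' c' = Hmat p (a + a') (b + b' + a * c') (c + c') := by
  simp only [Hmat, Matrix.mul_fin_three]
  congr 1 <;> ring

lemma Hmat_one (p : ℕ) : Hmat p 0 0 0 = 1 := by
  rw [Matrix.one_fin_three]; rfl

/-- `M(a,b,c)` as an element of `GL₃(𝔽_p)`. -/
def Hgl (p : ℕ) (a b c : ZMod p) : GL (Fin 3) (ZMod p) :=
  ⟨Hmat p a b c, Hmat p (-a) (a * c - b) (-c),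
    by rw [Hmat_mul]; rw [show a + -a = 0 by ring, show b + (a*c-b) + a * -c = 0 by ring,
      show c + -c = 0 by ring, Hmat_one],
    by rw [Hmat_mul]; rw [show -a + a = 0 by ring, show (a*c-b) + b + -a * c = 0 by ring,
      show -c + c = 0 by ring, Hmat_one]⟩

lemma Hgl_mul (p : ℕ) (a b c a' b' c' : ZMod p) :
    Hgl p a b c * Hgl p a' b' c' = Hgl p (a + a') (b + b' + a * c') (c + c') :=
  Units.ext (Hmat_mul p a b c a' b' c')

-- new auxiliary material
lemma Hgl_one (p : ℕ) : Hgl p 0 0 0 = 1 := Units.ext (Hmat_one p)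

lemma Hgl_inj (p : ℕ) {a b c a' b' c' : ZMod p} (h : Hgl p a b c = Hgl p a' b' c') :
    a = a' ∧ b = b' ∧ c = c' := by
  have h0 : Hmat p a b c = Hmat p a' b' c' := congrArg Units.val h
  refine ⟨?_, ?_, ?_⟩
  · have := congrFun (congrFun h0 0) 1
    simpa [Hmat] using this
  · have := congrFun (congrFun h0 0) 2
    simpa [Hmat] using this
  · have := congrFun (congrFun h0 1) 2
    simpa [Hmat] using this

lemma Hgl_pow (p : ℕ) (a b c : ZMod p) (n : ℕ) :
    Hgl p a b c ^ n = Hgl p (n * a) (n * b + (n.choose 2) * (a * c)) (n * c) := by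
  induction n with
  | zero => simpa using (Hgl_one p).symm
  | succ n ih =>
      rw [pow_succ, ih, Hgl_mul]
      have h2 : ((n+1).choose 2 : ZMod p) = (n.choose 2 : ZMod p) + n := by
        have : (n+1).choose 2 = n.choose 1 + n.choose 2 := Nat.choose_succ_succ n 1
        rw [this]; push_cast [Nat.choose_one_right]; ring
      push_cast [h2]
      congr 1 <;> ring


/-- The discrete Heisenberg group `H_p`: the subgroup of `GL₃(𝔽_p)` consisting of the
upper unitriangular matrices `M(a,b,c)`. -/
def Heisenberg (p : ℕ) : Subgroup (GL (Fin 3) (ZMod p)) where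
  carrier := { g | ∃ a b c : ZMod p, g = Hgl p a b c }
  one_mem' := ⟨0, 0, 0, Units.ext (Hmat_one p).symm⟩
  mul_mem' := by
    rintro g h ⟨a, b, c, rfl⟩ ⟨a', b', c', rfl⟩
    exact ⟨_, _, _, Hgl_mul p a b c a' b' c'⟩
  inv_mem' := by
    rintro g ⟨a, b, c, rfl⟩
    exact ⟨-a, a * c - b, -c, Units.ext rfl⟩

/-- The element `X = M(1,0,0)` of `H_p`. -/
def He.X (p : ℕ) : Heisenberg p := ⟨Hgl p 1 0 0, 1, 0, 0, rfl⟩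

/-- The element `Y = M(0,0,1)` of `H_p`. -/
def He.Y (p : ℕ) : Heisenberg p := ⟨Hgl p 0 0 1, 0, 0, 1, rfl⟩

/-- The element `Z = M(0,1,0)` of `H_p`. -/
def He.Z (p : ℕ) : Heisenberg p := ⟨Hgl p 0 1 0, 0, 1, 0, rfl⟩

/-- The generic element of the Heisenberg group. -/
def HeM (p : ℕ) (a b c : ZMod p) : Heisenberg p := ⟨Hgl p a b c, a, b, c, rfl⟩

lemma HeM_mul (p : ℕ) (a b c a' b' c' : ZMod p) :
    HeM p a b c * HeM p a' b' c' = HeM p (a + a') (b + b' + a * c') (c + c') :=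
  Subtype.ext (Hgl_mul p a b c a' b' c')

lemma HeM_one (p : ℕ) : HeM p 0 0 0 = 1 := Subtype.ext (Hgl_one p)

lemma HeM_inj (p : ℕ) {a b c a' b' c' : ZMod p} (h : HeM p a b c = HeM p a' b' c') :
    a = a' ∧ b = b' ∧ c = c' := Hgl_inj p (congrArg Subtype.val h)

lemma HeM_pow (p : ℕ) (a b c : ZMod p) (n : ℕ) :
    HeM p a b c ^ n = HeM p (n * a) (n * b + (n.choose 2) * (a * c)) (n * c) := by
  apply Subtype.ext
  have : ((HeM p a b c ^ n : Heisenberg p) : GL (Fin 3) (ZMod p)) = Hgl p a b c ^ n := by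
    simp [HeM]
  rw [this, Hgl_pow]; rfl

lemma exists_HeM (p : ℕ) (g : Heisenberg p) : ∃ a b c : ZMod p, g = HeM p a b c := by
  obtain ⟨a, b, c, h⟩ := g.2
  exact ⟨a, b, c, Subtype.ext h⟩

lemma HeM_central (p : ℕ) (b : ZMod p) : HeM p 0 b 0 ∈ Subgroup.center (Heisenberg p) := by
  rw [Subgroup.mem_center_iff]
  intro x
  obtain ⟨a', b', c', rfl⟩ := exists_HeM p x
  rw [HeM_mul, HeM_mul]
  congr 1 <;> ring

lemma He_pow_p (p : ℕ) (hp : p.Prime) (hodd : Odd p) (g : Heisenberg p) : g ^ p = 1 := by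
  obtain ⟨a, b, c, rfl⟩ := exists_HeM p g
  rw [HeM_pow]
  have h1 : (p : ZMod p) = 0 := ZMod.natCast_self p
  have h2 : (p.choose 2 : ZMod p) = 0 := by
    rw [ZMod.natCast_eq_zero_iff]
    refine Nat.Prime.dvd_choose_self hp (by norm_num) ?_
    have hne : p ≠ 2 := by rintro rfl; simp [Nat.odd_iff] at hodd
    have := hp.two_le
    omega
  rw [h1, h2, ← HeM_one p]
  congr 1 <;> ring

lemma He_Z_pow_aux (p : ℕ) (n : ℕ) : HeM p 0 1 0 ^ n = HeM p 0 (n : ZMod p) 0 := by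
  rw [HeM_pow]
  congr 1 <;> ring


lemma He_comm_rel (p : ℕ) (a b c a' b' c' : ZMod p) :
    HeM p a b c * HeM p a' b' c' =
      HeM p 0 (a * c' - a' * c) 0 * (HeM p a' b' c' * HeM p a b c) := by
  rw [HeM_mul, HeM_mul, HeM_mul]
  congr 1 <;> ring


/-- A complex representation `ρ : G → GL(V)` is irreducible if `V` is nonzero and has no
`G`-invariant subspaces other than `0` and `V`. -/
def IsIrreducibleRep {G V : Type*} [Group G] [AddCommGroup V] [Module ℂ V]
    (ρ : Representation ℂ G V) : Prop :=
  Nontrivial V ∧ ∀ W : Submodule ℂ V, (∀ g : G, ∀ v ∈ W, ρ g v ∈ W) → W = ⊥ ∨ W = ⊤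

lemma schur_scalar {G : Type*} [Group G] {V : Type} [AddCommGroup V] [Module ℂ V]
    [FiniteDimensional ℂ V]
    {ρ : Representation ℂ G V} (hirr : IsIrreducibleRep ρ)
    {z : G} (hz : z ∈ Subgroup.center G) :
    ∃ ω : ℂ, ρ z = ω • (1 : Module.End ℂ V) := by
  obtain ⟨hVnt, hsub⟩ := hirr
  haveI := hVnt
  obtain ⟨ω, hω⟩ := Module.End.exists_eigenvalue (ρ z : Module.End ℂ V)
  refine ⟨ω, ?_⟩
  have hinv : ∀ g : G, ∀ v ∈ Module.End.eigenspace (ρ z) ω,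
      ρ g v ∈ Module.End.eigenspace (ρ z) ω := by
    intro g v hv
    rw [Module.End.mem_eigenspace_iff] at hv ⊢
    have h1 : ρ z (ρ g v) = ρ g (ρ z v) := by
      rw [← Module.End.mul_apply, ← _root_.map_mul, ← Subgroup.mem_center_iff.mp hz g, _root_.map_mul,
        Module.End.mul_apply]
    rw [h1, hv, _root_.map_smul]
  rcases hsub _ hinv with h | h
  · exact absurd h hω
  · ext v
    have hv : v ∈ Module.End.eigenspace (ρ z) ω := h ▸ Submodule.mem_top
    rw [LinearMap.smul_apply, Module.End.one_apply]
    exact Module.End.mem_eigenspace_iff.mp hv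

lemma finrank_sum_le_of_iSupIndep {K V ι : Type*} [Field K] [AddCommGroup V] [Module K V]
    [FiniteDimensional K V] {E : ι → Submodule K V} [DecidableEq ι] (h : iSupIndep E)
    (s : Finset ι) :
    ∑ i ∈ s, Module.finrank K (E i) ≤ Module.finrank K V := by
  have key : ∑ i ∈ s, Module.finrank K (E i) = Module.finrank K ↥(⨆ i ∈ s, E i) := by
    induction s using Finset.induction_on with
    | empty =>
      rw [show (⨆ i ∈ (∅ : Finset ι), E i) = ⊥ by simp, finrank_bot, Finset.sum_empty]
    | @insert a s ha ih =>
      rw [Finset.sum_insert ha, ih, Finset.iSup_insert]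
      have hd : Disjoint (E a) (⨆ i ∈ s, E i) := by
        refine (h a).mono_right ?_
        refine iSup_le fun i => iSup_le fun hi => ?_
        exact le_iSup_of_le i (le_iSup_of_le (fun hia => ha (hia ▸ hi)) le_rfl)
      have := Submodule.finrank_sup_add_finrank_inf_eq (E a) (⨆ i ∈ s, E i)
      rw [hd.eq_bot, finrank_bot] at this
      omega
  rw [key]
  exact Submodule.finrank_le _


/-- For an odd prime `p`, a faithful irreducible `p`-dimensional complex
representation `ρ` of `H_p` and a non-central `g ∈ H_p`, the map `ρ(g)` has exactly `p`
distinct eigenvalues `λ, λζ, …, λζ^{p−1}` (`λ ≠ 0`, `ζ` a primitive `p`-th root of unity),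
each eigenspace is one-dimensional, and `ρ(g)` has exactly `p` invariant lines in `V`. -/
theorem Heisenberg_noncentral_eigenvalues (p : ℕ) (hp : p.Prime) (hodd : Odd p)
    (V : Type) [AddCommGroup V] [Module ℂ V] [FiniteDimensional ℂ V]
    (ρ : Representation ℂ (Heisenberg p) V)
    (hirr : IsIrreducibleRep ρ) (hfaith : Function.Injective ρ)
    (hdim : Module.finrank ℂ V = p)
    (g : Heisenberg p) (hg : g ∉ Subgroup.center (Heisenberg p)) :
    ∃ lam ζ : ℂ, lam ≠ 0 ∧ IsPrimitiveRoot ζ p ∧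
      (∀ μ : ℂ, Module.End.HasEigenvalue (ρ g) μ ↔ ∃ k : Fin p, μ = lam * ζ ^ (k : ℕ)) ∧
      (∀ μ : ℂ, Module.End.HasEigenvalue (ρ g) μ →
        Module.finrank ℂ (Module.End.eigenspace (ρ g) μ) = 1) ∧
      Nat.card {W : Submodule ℂ V // Module.finrank ℂ W = 1 ∧ ∀ v ∈ W, ρ g v ∈ W} = p := by
  haveI : Fact p.Prime := ⟨hp⟩
  haveI : NeZero p := ⟨hp.ne_zero⟩
  obtain ⟨hVnt, hsub⟩ := id hirr
  haveI := hVnt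
  obtain ⟨a, b, c, rfl⟩ := exists_HeM p g
  have hac : ¬(a = 0 ∧ c = 0) := by
    rintro ⟨rfl, rfl⟩; exact hg (HeM_central p b)
  -- the central element Z acts as a scalar ω, a primitive p-th root of unity
  obtain ⟨ω, hω⟩ := schur_scalar hirr (HeM_central p 1)
  have hωp : ω ^ p = 1 := by
    have h1 : (ρ (HeM p 0 1 0)) ^ p = 1 := by
      rw [← _root_.map_pow, He_pow_p p hp hodd, _root_.map_one]
    rw [hω, smul_pow, one_pow] at h1
    obtain ⟨v, hv⟩ := exists_ne (0 : V)
    have h2 : ω ^ p • v = v := by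
      have := LinearMap.ext_iff.mp h1 v
      simpa using this
    have h3 : (ω ^ p - 1) • v = 0 := by
      rw [sub_smul, one_smul, h2, sub_self]
    rcases smul_eq_zero.mp h3 with h4 | h4
    · exact sub_eq_zero.mp h4
    · exact absurd h4 hv
  have hωne : ω ≠ 1 := by
    rintro rfl
    have h1 : ρ (HeM p 0 1 0) = ρ 1 := by rw [hω, one_smul, _root_.map_one]
    have h2 := hfaith h1
    have h3 := (HeM_inj p (h2.trans (HeM_one p).symm)).2.1
    exact one_ne_zero h3
  have hωprim : IsPrimitiveRoot ω p := by
    have hord : orderOf ω = p := orderOf_eq_prime hωp hωne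
    exact hord ▸ IsPrimitiveRoot.orderOf ω
  -- choose h not commuting with g
  obtain ⟨a', b', c', hd⟩ : ∃ a' b' c' : ZMod p, a * c' - a' * c ≠ 0 := by
    by_cases ha : a = 0
    · have hc : c ≠ 0 := fun hc => hac ⟨ha, hc⟩
      exact ⟨1, 0, 0, by simpa [ha] using neg_ne_zero.mpr hc⟩
    · exact ⟨0, 0, 1, by simpa using ha⟩
  set d : ZMod p := a * c' - a' * c with hddef
  set m : ℕ := d.val with hmdef
  have hm : (m : ZMod p) = d := by rw [hmdef, ZMod.natCast_val, ZMod.cast_id]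
  have hmnd : ¬ p ∣ m := by
    intro hdvd
    rw [← hm] at hd
    exact hd ((ZMod.natCast_eq_zero_iff m p).mpr hdvd)
  set ζ : ℂ := ω ^ m with hζdef
  have hζ : IsPrimitiveRoot ζ p :=
    hωprim.pow_of_coprime m (hp.coprime_iff_not_dvd.mpr hmnd).symm
  set f : Module.End ℂ V := ρ (HeM p a b c) with hfdef
  have hfp : f ^ p = 1 := by rw [hfdef, ← _root_.map_pow, He_pow_p p hp hodd, _root_.map_one]
  have hZm : HeM p 0 1 0 ^ m = HeM p 0 d 0 := by rw [He_Z_pow_aux, hm]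
  have hρZm : ρ (HeM p 0 d 0) = ζ • (1 : Module.End ℂ V) := by
    rw [← hZm, _root_.map_pow, hω, smul_pow, one_pow, hζdef]
  have hrel : f * ρ (HeM p a' b' c') = ζ • (ρ (HeM p a' b' c') * f) := by
    have h2 := congrArg ρ (He_comm_rel p a b c a' b' c')
    rw [_root_.map_mul, _root_.map_mul, _root_.map_mul, ← hddef, hρZm] at h2
    rw [hfdef, h2, smul_mul_assoc, one_mul]
  -- eigenvalues
  obtain ⟨lam, hlam⟩ := Module.End.exists_eigenvalue f
  have hpow1 : ∀ μ : ℂ, Module.End.HasEigenvalue f μ → μ ^ p = 1 := by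
    intro μ hμ
    obtain ⟨v, hv⟩ := hμ.exists_hasEigenvector
    have h1 : (f ^ p) v = μ ^ p • v := hv.pow_apply p
    rw [hfp] at h1
    have h2 : (μ ^ p - 1) • v = 0 := by
      rw [sub_smul, one_smul, ← h1, Module.End.one_apply, sub_self]
    rcases smul_eq_zero.mp h2 with h3 | h3
    · exact sub_eq_zero.mp h3
    · exact absurd h3 hv.2
  have hlam0 : lam ≠ 0 := by
    rintro rfl
    have h1 := hpow1 0 hlam
    rw [zero_pow hp.ne_zero] at h1
    exact zero_ne_one h1
  have hρh_ne : ∀ v : V, v ≠ 0 → ρ (HeM p a' b' c') v ≠ 0 := by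
    intro v hv h0
    apply hv
    have h1 : ρ (HeM p a' b' c')⁻¹ (ρ (HeM p a' b' c') v) = v := by
      rw [← Module.End.mul_apply, ← _root_.map_mul, inv_mul_cancel, _root_.map_one,
        Module.End.one_apply]
    rw [h0, map_zero] at h1
    exact h1.symm
  have hstep : ∀ μ : ℂ, Module.End.HasEigenvalue f μ → Module.End.HasEigenvalue f (ζ * μ) := by
    intro μ hμ
    obtain ⟨v, hv⟩ := hμ.exists_hasEigenvector
    have hvμ : f v = μ • v := Module.End.mem_eigenspace_iff.mp hv.1
    refine Module.End.hasEigenvalue_of_hasEigenvector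
      (x := ρ (HeM p a' b' c') v) ⟨?_, hρh_ne v hv.2⟩
    rw [Module.End.mem_eigenspace_iff]
    have h1 := LinearMap.ext_iff.mp hrel v
    simp only [Module.End.mul_apply, LinearMap.smul_apply] at h1
    rw [h1, hvμ, _root_.map_smul, smul_smul]
  have hall : ∀ k : ℕ, Module.End.HasEigenvalue f (lam * ζ ^ k) := by
    intro k
    induction k with
    | zero => simpa using hlam
    | succ k ih =>
        have h1 := hstep _ ih
        have h2 : ζ * (lam * ζ ^ k) = lam * ζ ^ (k + 1) := by ring
        rwa [h2] at h1
  have hchar : ∀ μ : ℂ, Module.End.HasEigenvalue f μ ↔ ∃ k : Fin p, μ = lam * ζ ^ (k : ℕ) := by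
    intro μ
    constructor
    · intro hμ
      have h1 : (μ * lam⁻¹) ^ p = 1 := by
        rw [mul_pow, hpow1 μ hμ, inv_pow, hpow1 lam hlam, inv_one, mul_one]
      obtain ⟨i, hip, hi⟩ := hζ.eq_pow_of_pow_eq_one h1
      refine ⟨⟨i, hip⟩, ?_⟩
      show μ = lam * ζ ^ i
      rw [hi, mul_comm μ lam⁻¹, ← mul_assoc, mul_inv_cancel₀ hlam0, one_mul]
    · rintro ⟨k, rfl⟩
      exact hall k
  have hinj : Function.Injective (fun k : Fin p => lam * ζ ^ (k : ℕ)) := by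
    intro j k hjk
    have h1 := mul_left_cancel₀ hlam0 hjk
    exact Fin.ext (hζ.pow_inj j.2 k.2 h1)
  -- eigenspace dimensions
  have hEpos : ∀ k : Fin p,
      0 < Module.finrank ℂ (Module.End.eigenspace f (lam * ζ ^ (k : ℕ))) := by
    intro k
    have h1 : Module.End.eigenspace f (lam * ζ ^ (k : ℕ)) ≠ ⊥ := (hchar _).mpr ⟨k, rfl⟩
    rw [Module.finrank_pos_iff]
    exact Submodule.nontrivial_iff_ne_bot.mpr h1
  have hindep : iSupIndep (fun k : Fin p =>
      Module.End.eigenspace f (lam * ζ ^ (k : ℕ))) :=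
    (Module.End.eigenspaces_iSupIndep f).comp hinj
  have hsumle := finrank_sum_le_of_iSupIndep hindep Finset.univ
  rw [hdim] at hsumle
  have hone : ∀ k : Fin p,
      Module.finrank ℂ (Module.End.eigenspace f (lam * ζ ^ (k : ℕ))) = 1 := by
    by_contra hcon
    push_neg at hcon
    obtain ⟨k0, hk0⟩ := hcon
    have hlt : ∑ _k : Fin p, 1 <
        ∑ k : Fin p, Module.finrank ℂ (Module.End.eigenspace f (lam * ζ ^ (k : ℕ))) := by
      refine Finset.sum_lt_sum (fun i _ => hEpos i) ⟨k0, Finset.mem_univ _, ?_⟩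
      have := hEpos k0
      omega
    have hcards : ∑ _k : Fin p, 1 = p := by simp
    omega
  have hdim1 : ∀ μ : ℂ, Module.End.HasEigenvalue f μ →
      Module.finrank ℂ (Module.End.eigenspace f μ) = 1 := by
    intro μ hμ
    obtain ⟨k, rfl⟩ := (hchar μ).mp hμ
    exact hone k
  -- counting invariant lines
  have hcount : Nat.card {W : Submodule ℂ V //
      Module.finrank ℂ W = 1 ∧ ∀ v ∈ W, ρ (HeM p a b c) v ∈ W} = p := by
    have he : ∀ k : Fin p,
        Module.finrank ℂ (Module.End.eigenspace f (lam * ζ ^ (k : ℕ))) = 1 ∧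
        ∀ v ∈ Module.End.eigenspace f (lam * ζ ^ (k : ℕ)),
          ρ (HeM p a b c) v ∈ Module.End.eigenspace f (lam * ζ ^ (k : ℕ)) := by
      intro k
      refine ⟨hone k, fun v hv => ?_⟩
      have h1 : f v = (lam * ζ ^ (k : ℕ)) • v := Module.End.mem_eigenspace_iff.mp hv
      show f v ∈ _
      rw [h1]
      exact Submodule.smul_mem _ _ hv
    set e : Fin p → {W : Submodule ℂ V //
        Module.finrank ℂ W = 1 ∧ ∀ v ∈ W, ρ (HeM p a b c) v ∈ W} :=
      fun k => ⟨Module.End.eigenspace f (lam * ζ ^ (k : ℕ)), he k⟩ with hedef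
    have hbij : Function.Bijective e := by
      constructor
      · intro j k hjk
        have hEjk : Module.End.eigenspace f (lam * ζ ^ (j : ℕ)) =
            Module.End.eigenspace f (lam * ζ ^ (k : ℕ)) := congrArg Subtype.val hjk
        obtain ⟨v, hvmem, hv0⟩ := (Submodule.ne_bot_iff _).mp ((hchar _).mpr ⟨j, rfl⟩)
        have h1 : f v = (lam * ζ ^ (j : ℕ)) • v := Module.End.mem_eigenspace_iff.mp hvmem
        have h2 : f v = (lam * ζ ^ (k : ℕ)) • v :=
          Module.End.mem_eigenspace_iff.mp (hEjk ▸ hvmem)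
        have h3 : lam * ζ ^ (j : ℕ) = lam * ζ ^ (k : ℕ) := by
          by_contra hne
          have h4 : (lam * ζ ^ (j : ℕ) - lam * ζ ^ (k : ℕ)) • v = 0 := by
            rw [sub_smul, ← h1, ← h2, sub_self]
          rcases smul_eq_zero.mp h4 with h5 | h5
          · exact hne (sub_eq_zero.mp h5)
          · exact hv0 h5
        exact hinj h3
      · rintro ⟨W, hW1, hWinv⟩
        have hWne : W ≠ ⊥ := by
          intro h0
          rw [h0, finrank_bot] at hW1
          exact zero_ne_one hW1
        obtain ⟨v, hvW, hv0⟩ := (Submodule.ne_bot_iff W).mp hWne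
        have hspan : Submodule.span ℂ {v} = W := by
          apply Submodule.eq_of_le_of_finrank_le
          · rw [Submodule.span_singleton_le_iff_mem]; exact hvW
          · rw [hW1, finrank_span_singleton hv0]
        have hfvW : f v ∈ W := hWinv v hvW
        rw [← hspan] at hfvW
        obtain ⟨μ, hμv⟩ := Submodule.mem_span_singleton.mp hfvW
        have hμeig : Module.End.HasEigenvalue f μ :=
          Module.End.hasEigenvalue_of_hasEigenvector
            ⟨Module.End.mem_eigenspace_iff.mpr hμv.symm, hv0⟩
        obtain ⟨k, rfl⟩ := (hchar μ).mp hμeig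
        refine ⟨k, ?_⟩
        apply Subtype.ext
        show Module.End.eigenspace f _ = W
        have hle : W ≤ Module.End.eigenspace f (lam * ζ ^ (k : ℕ)) := by
          rw [← hspan, Submodule.span_singleton_le_iff_mem]
          exact Module.End.mem_eigenspace_iff.mpr hμv.symm
        exact (Submodule.eq_of_le_of_finrank_le hle (by rw [hW1, hone k])).symm
    calc Nat.card {W : Submodule ℂ V //
          Module.finrank ℂ W = 1 ∧ ∀ v ∈ W, ρ (HeM p a b c) v ∈ W}
        = Nat.card (Fin p) := (Nat.card_eq_of_bijective e hbij).symm
      _ = p := by simp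
  exact ⟨lam, ζ, hlam0, hζ, hchar, hdim1, hcount⟩
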